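/- Applying Ψ entrywise to the matrix Φ^R_w yields Ψ(Φ^R_w) = D · Φ^R_w · D_w^{−1}. -/
import Mathlib


/-!
STATEMENT 10: Applying `Ψ` entrywise to the matrix `Φ^R_w` yields
`Ψ(Φ^R_w) = D · Φ^R_w · D_w^{−1}`.

Setup as in the paper (0-indexed, the strand `1` of the paper corresponding to
`⟨0, _⟩ : Fin n`).  The scalars are extended from `R₀ = ℂ[μ^{±1}, λ^{±1}, U^{±1}]` to
`R₀[g^{±1}]`, which we model as the Laurent polynomial ring in four variables
`R₁ = AddMonoidAlgebra ℂ (Fin 4 →₀ ℤ)` with `μ = x₀, λ = x₁, U = x₂, g = x₃`; the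
ring `F[g^{±1}]` is the polynomial ring over `R₁` in the variables `a_{ij}`,
`i ≠ j ∈ Fin n`, and the matrix `Φ^R_w` (whose entries have integer coefficients in
the `a_{ij}`) is regarded as a matrix over it.  The hypothesis that `π(w)` is an
`n`-cycle is expressed by transitivity of its powers, `d(i)` is the least `k ≥ 0` with
`π(w)^k(i) = 1` (via `Nat.find`), `Ψ(a_{ij}) = (−g)^{d(i)−d(j)}·a_{ij}`,
`D = diag((−g)^{d(1)},…,(−g)^{d(n)})` and `D_w = diag((−g)^{d(π(w)(1))},…)`; the matrix
`D_w^{−1}` is the diagonal matrix with entries `(−g)^{−d(π(w)(i))}`.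
-/

noncomputable section

/-- The Laurent polynomial ring `R₁ = R₀[g^{±1}] = ℂ[μ^{±1}, λ^{±1}, U^{±1}, g^{±1}]`. -/
abbrev R1 : Type := AddMonoidAlgebra ℂ (Fin 4 →₀ ℤ)

/-- The Laurent monomial `(−g)^m`, for `m : ℤ`. -/
def ngpow (m : ℤ) : R1 :=
  AddMonoidAlgebra.single (Finsupp.single 3 m) (if Even m then 1 else -1)

/-- The index set of the variables `a_{ij}`, `i ≠ j`. -/
abbrev Vars (n : ℕ) := {p : Fin n × Fin n // p.1 ≠ p.2}

/-- The polynomial ring `F[g^{±1}]` over `R₁` in the variables `a_{ij}`. -/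
abbrev FpolyG (n : ℕ) := MvPolynomial (Vars n) R1

/-- The generator `a_{ij}` (junk value `0` if `i = j`; all uses below have `i ≠ j`). -/
def av (n : ℕ) (i j : Fin n) : FpolyG n :=
  if h : i ≠ j then MvPolynomial.X ⟨(i, j), h⟩ else 0

/-- The image of the generator `a_{ij}` under `φ_{σ_k}`, where `K, K1` stand for the
strands `k, k+1`. -/
def phiGen (n : ℕ) (K K1 : Fin n) (i j : Fin n) : FpolyG n :=
  if i = K ∧ j = K1 then -(av n K1 K)
  else if i = K1 ∧ j = K then -(av n K K1)
  else if i = K then av n K1 j - av n K1 K * av n K j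
  else if i = K1 then av n K j
  else if j = K then av n i K1 - av n i K * av n K K1
  else if j = K1 then av n i K
  else av n i j

/-- The algebra endomorphism `φ_{σ_k}`. -/
def phi (n : ℕ) (K K1 : Fin n) : FpolyG n →ₐ[R1] FpolyG n :=
  MvPolynomial.aeval fun v => phiGen n K K1 v.1.1 v.1.2

/-- The permutation `π(w) = s_{k₁} ∘ ⋯ ∘ s_{k_ℓ}` of a positive braid word. -/
def permWord (n : ℕ) : List {k : ℕ // k + 1 < n} → Equiv.Perm (Fin n)
  | [] => 1
  | k :: w => Equiv.swap ⟨k.1, by have := k.2; omega⟩ ⟨k.1 + 1, k.2⟩ * permWord n w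

/-- The matrix `Φ^R_{σ_k}`. -/
def PhiRgen (n : ℕ) (K K1 : Fin n) : Matrix (Fin n) (Fin n) (FpolyG n) :=
  Matrix.of fun i j =>
    if i = K ∧ j = K then -(av n K K1)
    else if i = K ∧ j = K1 then 1
    else if i = K1 ∧ j = K then 1
    else if i = K1 ∧ j = K1 then 0
    else if i = j then 1 else 0

/-- `Φ^R` of the empty word is the identity, and `Φ^R_{σ_k w'} = Φ^R_{σ_k}·φ_{σ_k}(Φ^R_{w'})`. -/
def PhiR (n : ℕ) : List {k : ℕ // k + 1 < n} → Matrix (Fin n) (Fin n) (FpolyG n)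
  | [] => 1
  | k :: w =>
      PhiRgen n ⟨k.1, by have := k.2; omega⟩ ⟨k.1 + 1, k.2⟩ *
        (PhiR n w).map (phi n ⟨k.1, by have := k.2; omega⟩ ⟨k.1 + 1, k.2⟩)

/-- The `R₁`-algebra automorphism `Ψ` with `Ψ(a_{ij}) = (−g)^{d(i)−d(j)}·a_{ij}`. -/
def Psi (n : ℕ) (d : Fin n → ℤ) : FpolyG n →ₐ[R1] FpolyG n :=
  MvPolynomial.aeval fun v =>
    MvPolynomial.C (ngpow (d v.1.1 - d v.1.2)) * MvPolynomial.X v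

/-- The diagonal matrix `diag((−g)^{e(1)},…,(−g)^{e(n)})`. -/
def Dmat (n : ℕ) (e : Fin n → ℤ) : Matrix (Fin n) (Fin n) (FpolyG n) :=
  Matrix.diagonal fun i => MvPolynomial.C (ngpow (e i))

lemma ngpow_add (a b : ℤ) : ngpow a * ngpow b = ngpow (a + b) := by
  unfold ngpow
  rw [AddMonoidAlgebra.single_mul_single, ← Finsupp.single_add]
  congr 1
  by_cases ha : Even a <;> by_cases hb : Even b <;>
    simp [ha, hb, Int.even_add, *]

lemma ngpow_zero : ngpow 0 = 1 := by
  simp [ngpow, AddMonoidAlgebra.one_def]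

lemma C_ngpow_mul (n : ℕ) (a b : ℤ) :
    (MvPolynomial.C (ngpow a) : FpolyG n) * MvPolynomial.C (ngpow b)
      = MvPolynomial.C (ngpow (a + b)) := by
  rw [← map_mul, ngpow_add]

lemma psi_av (n : ℕ) (d : Fin n → ℤ) (i j : Fin n) (h : i ≠ j) :
    Psi n d (av n i j) = MvPolynomial.C (ngpow (d i - d j)) * av n i j := by
  simp [Psi, av, h]

lemma psi_phiGen (n : ℕ) (d : Fin n → ℤ) (K K1 : Fin n) (hK : K ≠ K1)
    (i j : Fin n) (hij : i ≠ j) :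
    Psi n d (phiGen n K K1 i j)
      = MvPolynomial.C (ngpow (d (Equiv.swap K K1 i) - d (Equiv.swap K K1 j)))
          * phiGen n K K1 i j := by
  unfold phiGen
  split_ifs with h1 h2 h3 h4 h5 h6
  · obtain ⟨rfl, rfl⟩ := h1
    rw [map_neg, psi_av n d _ _ hK.symm, Equiv.swap_apply_left, Equiv.swap_apply_right]
    ring
  · obtain ⟨rfl, rfl⟩ := h2
    rw [map_neg, psi_av n d _ _ hK, Equiv.swap_apply_right, Equiv.swap_apply_left]
    ring
  · obtain rfl := h3
    have hj1 : j ≠ K1 := fun hh => h1 ⟨rfl, hh⟩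
    rw [map_sub, map_mul, psi_av n d _ _ hK.symm, psi_av n d _ _ hj1.symm,
      psi_av n d _ _ hij, Equiv.swap_apply_left,
      Equiv.swap_apply_of_ne_of_ne hij.symm hj1,
      show (MvPolynomial.C (ngpow (d K1 - d i)) * av n K1 i) *
          (MvPolynomial.C (ngpow (d i - d j)) * av n i j)
        = MvPolynomial.C (ngpow (d K1 - d i)) * MvPolynomial.C (ngpow (d i - d j))
            * (av n K1 i * av n i j) by ring, C_ngpow_mul,
      show d K1 - d i + (d i - d j) = d K1 - d j by ring]
    ring
  · obtain rfl := h4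
    have hjK : j ≠ K := fun hh => h2 ⟨rfl, hh⟩
    rw [psi_av n d _ _ hjK.symm, Equiv.swap_apply_right,
      Equiv.swap_apply_of_ne_of_ne hjK hij.symm]
  · obtain rfl := h5
    rw [map_sub, map_mul, psi_av n d _ _ h4, psi_av n d _ _ hij,
      psi_av n d _ _ hK, Equiv.swap_apply_left,
      Equiv.swap_apply_of_ne_of_ne hij h4,
      show (MvPolynomial.C (ngpow (d i - d j)) * av n i j) *
          (MvPolynomial.C (ngpow (d j - d K1)) * av n j K1)
        = MvPolynomial.C (ngpow (d i - d j)) * MvPolynomial.C (ngpow (d j - d K1))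
            * (av n i j * av n j K1) by ring, C_ngpow_mul,
      show d i - d j + (d j - d K1) = d i - d K1 by ring]
    ring
  · obtain rfl := h6
    rw [psi_av n d _ _ h3, Equiv.swap_apply_right,
      Equiv.swap_apply_of_ne_of_ne h3 hij]
  · rw [psi_av n d _ _ hij, Equiv.swap_apply_of_ne_of_ne h3 h4,
      Equiv.swap_apply_of_ne_of_ne h5 h6]

lemma psi_phi_comm (n : ℕ) (d : Fin n → ℤ) (K K1 : Fin n) (hK : K ≠ K1) :
    (Psi n d).comp (phi n K K1)
      = (phi n K K1).comp (Psi n (fun i => d (Equiv.swap K K1 i))) := by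
  apply MvPolynomial.algHom_ext
  rintro ⟨⟨i, j⟩, hij⟩
  rw [AlgHom.comp_apply, AlgHom.comp_apply]
  have e1 : phi n K K1 (MvPolynomial.X ⟨(i, j), hij⟩) = phiGen n K K1 i j :=
    MvPolynomial.aeval_X _ _
  have e2 : Psi n (fun i => d (Equiv.swap K K1 i)) (MvPolynomial.X ⟨(i, j), hij⟩)
      = MvPolynomial.C (ngpow (d (Equiv.swap K K1 i) - d (Equiv.swap K K1 j)))
          * MvPolynomial.X ⟨(i, j), hij⟩ :=
    MvPolynomial.aeval_X _ _
  rw [e1, e2, psi_phiGen n d K K1 hK i j hij, map_mul]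
  congr 1
  · show _ = phi n K K1 (MvPolynomial.C _)
    rw [show phi n K K1 (MvPolynomial.C
        (ngpow (d (Equiv.swap K K1 i) - d (Equiv.swap K K1 j))))
      = algebraMap R1 (FpolyG n)
          (ngpow (d (Equiv.swap K K1 i) - d (Equiv.swap K K1 j))) from
      MvPolynomial.aeval_C _ _, MvPolynomial.algebraMap_eq]
  · exact e1.symm

lemma Dmat_mul_Dmat (n : ℕ) (e f : Fin n → ℤ) :
    Dmat n e * Dmat n f = Dmat n (fun i => e i + f i) := by
  simp only [Dmat, Matrix.diagonal_mul_diagonal]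
  exact congrArg Matrix.diagonal (funext fun i => C_ngpow_mul n _ _)

lemma Dmat_zero (n : ℕ) : Dmat n (fun _ => 0) = 1 := by
  simp [Dmat, ngpow_zero]

lemma Dmat_map_phi (n : ℕ) (e : Fin n → ℤ) (K K1 : Fin n) :
    (Dmat n e).map (phi n K K1) = Dmat n e := by
  ext i j
  simp only [Dmat, Matrix.map_apply, Matrix.diagonal_apply]
  split_ifs
  · simp [phi, MvPolynomial.algebraMap_eq]
  · simp

lemma C_conj (n : ℕ) (a b : ℤ) (x : FpolyG n) :
    MvPolynomial.C (ngpow a) * x * MvPolynomial.C (ngpow b)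
      = MvPolynomial.C (ngpow (a + b)) * x := by
  rw [← C_ngpow_mul n a b]; ring

lemma psi_PhiRgen (n : ℕ) (d : Fin n → ℤ) (K K1 : Fin n) (hK : K ≠ K1) :
    (PhiRgen n K K1).map (Psi n d)
      = Dmat n d * PhiRgen n K K1 * Dmat n (fun i => -(d (Equiv.swap K K1 i))) := by
  ext i j
  simp only [Matrix.map_apply, Dmat, Matrix.mul_diagonal, Matrix.diagonal_mul,
    PhiRgen, Matrix.of_apply]
  rw [C_conj]
  split_ifs with c1 c2 c3 c4 c5
  · obtain ⟨rfl, rfl⟩ := c1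
    rw [map_neg, psi_av n d _ _ hK, Equiv.swap_apply_left, ← sub_eq_add_neg]
    ring
  · obtain ⟨rfl, rfl⟩ := c2
    rw [map_one, Equiv.swap_apply_right, mul_one, ← sub_eq_add_neg,
      sub_self, ngpow_zero, map_one]
  · obtain ⟨rfl, rfl⟩ := c3
    rw [map_one, Equiv.swap_apply_left, mul_one, ← sub_eq_add_neg,
      sub_self, ngpow_zero, map_one]
  · simp
  · subst c5
    have hiK : i ≠ K := fun e => c1 ⟨e, e⟩
    have hiK1 : i ≠ K1 := fun e => c4 ⟨e, e⟩
    rw [map_one, Equiv.swap_apply_of_ne_of_ne hiK hiK1, mul_one, ← sub_eq_add_neg,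
      sub_self, ngpow_zero, map_one]
  · simp

lemma map_mul_alg {n : ℕ} (A B : Matrix (Fin n) (Fin n) (FpolyG n))
    (f : FpolyG n →ₐ[R1] FpolyG n) :
    (A * B).map f = A.map f * B.map f := by
  ext i j
  simp [Matrix.mul_apply, Matrix.map_apply, map_sum]

lemma psi_PhiR (n : ℕ) (d : Fin n → ℤ) (w : List {k : ℕ // k + 1 < n}) :
    (PhiR n w).map (Psi n d)
      = Dmat n d * PhiR n w * Dmat n (fun i => -(d (permWord n w i))) := by
  induction w generalizing d with
  | nil =>
    rw [show PhiR n [] = 1 from rfl, show permWord n [] = 1 from rfl,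
      Matrix.map_one _ (map_zero _) (map_one _), mul_one, Dmat_mul_Dmat]
    simp [Dmat_zero]
  | cons k w ih =>
    set K : Fin n := ⟨k.1, by have := k.2; omega⟩ with hKdef
    set K1 : Fin n := ⟨k.1 + 1, k.2⟩ with hK1def
    have hK : K ≠ K1 := by
      simp only [hKdef, hK1def, Fin.mk.injEq, ne_eq]
      omega
    have hPhiR : PhiR n (k :: w) = PhiRgen n K K1 * (PhiR n w).map (phi n K K1) := rfl
    have hperm : ∀ i, permWord n (k :: w) i = Equiv.swap K K1 (permWord n w i) :=
      fun i => rfl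
    rw [hPhiR]
    rw [map_mul_alg (PhiRgen n K K1) ((PhiR n w).map (phi n K K1)) (Psi n d)]
    rw [Matrix.map_map (f := (phi n K K1 : FpolyG n → FpolyG n))
      (g := (Psi n d : FpolyG n → FpolyG n))]
    have hcomm : ((Psi n d : FpolyG n → FpolyG n) ∘ (phi n K K1 : FpolyG n → FpolyG n))
        = ((phi n K K1 : FpolyG n → FpolyG n) ∘
            (Psi n (fun i => d (Equiv.swap K K1 i)) : FpolyG n → FpolyG n)) := by
      funext x
      exact congrFun (congrArg (DFunLike.coe) (psi_phi_comm n d K K1 hK)) x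
    rw [hcomm, ← Matrix.map_map, ih (fun i => d (Equiv.swap K K1 i))]
    rw [show ((Dmat n (fun i => d (Equiv.swap K K1 i)) * PhiR n w *
          Dmat n (fun i => -(d (Equiv.swap K K1 (permWord n w i))))).map
            (phi n K K1 : FpolyG n → FpolyG n))
        = (Dmat n (fun i => d (Equiv.swap K K1 i))).map (phi n K K1) *
            ((PhiR n w).map (phi n K K1)) *
            (Dmat n (fun i => -(d (Equiv.swap K K1 (permWord n w i))))).map
              (phi n K K1) from by
      rw [map_mul_alg, map_mul_alg]]
    rw [Dmat_map_phi, Dmat_map_phi, psi_PhiRgen n d K K1 hK]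
    have : Dmat n (fun i => -(d (Equiv.swap K K1 i))) *
        Dmat n (fun i => d (Equiv.swap K K1 i)) = 1 := by
      rw [Dmat_mul_Dmat]
      simp [Dmat_zero]
    calc Dmat n d * PhiRgen n K K1 * Dmat n (fun i => -(d (Equiv.swap K K1 i))) *
          (Dmat n (fun i => d (Equiv.swap K K1 i)) * (PhiR n w).map (phi n K K1) *
            Dmat n (fun i => -(d (Equiv.swap K K1 (permWord n w i)))))
        = Dmat n d * PhiRgen n K K1 *
            (Dmat n (fun i => -(d (Equiv.swap K K1 i))) *
              Dmat n (fun i => d (Equiv.swap K K1 i))) *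
            (PhiR n w).map (phi n K K1) *
            Dmat n (fun i => -(d (Equiv.swap K K1 (permWord n w i)))) := by
          simp only [Matrix.mul_assoc]
      _ = Dmat n d * (PhiRgen n K K1 * (PhiR n w).map (phi n K K1)) *
            Dmat n (fun i => -(d (permWord n (k :: w) i))) := by
          rw [this, Matrix.mul_one,
            show (fun i => -(d (Equiv.swap K K1 (permWord n w i))))
              = fun i => -(d (permWord n (k :: w) i)) from
              funext fun i => by rw [hperm i]]
          simp only [Matrix.mul_assoc]

/-- `Ψ(Φ^R_w) = D · Φ^R_w · D_w^{−1}`. -/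
theorem Psi_PhiR (n : ℕ) (hn : 2 ≤ n) (w : List {k : ℕ // k + 1 < n})
    (h : ∀ i j : Fin n, ∃ m : ℕ, ((permWord n w) ^ m) i = j) :
    (PhiR n w).map (Psi n fun i => (Nat.find (h i ⟨0, by omega⟩) : ℤ))
      = Dmat n (fun i => (Nat.find (h i ⟨0, by omega⟩) : ℤ)) *
          PhiR n w *
          Dmat n (fun i => -(Nat.find (h (permWord n w i) ⟨0, by omega⟩) : ℤ)) := by
  exact psi_PhiR n (fun i => (Nat.find (h i ⟨0, by omega⟩) : ℤ)) w

end
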